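/- On the domain U = {(a,b) ∈ ℝ² : a > 0 and b > 0}, let Ḡ be the scaled Kantowski–Sachs supermetric, the 2×2 symmetric matrix field Ḡ(a,b) with entries Ḡ_{11} = 0, Ḡ_{12} = Ḡ_{21} = 8ab, Ḡ_{22} = 8a². Then the vector fields ξ₁ = (−a, b), ξ₂ = (−a/(2b), 1), ξ₃ = (1/(ab), 0) are Killing fields of Ḡ, i.e. £_{ξᵢ} Ḡ = 0 on U for i = 1,2,3, and the vector field h = (a/2, 0) is a homothetic Killing field with £_h Ḡ = Ḡ on U. -/

import Mathlib

/-! In coordinates `(a, b)`, the components of `£_ξ Ḡ - c Ḡ` are `16ab ∂_a ξ^b`,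
`8 (b ξ^a + a ξ^b + ab (∂_a ξ^a + ∂_b ξ^b) - c ab) + 8a² ∂_a ξ^b` (twice) and
`8a (2 (ξ^a + b ∂_b ξ^a + a ∂_b ξ^b) - c a)`, so `£_ξ Ḡ = c Ḡ` follows from three scalar equations
in `ξ` and its first partials. The four fields satisfy them (with `c = 0`, resp. `c = 1`) by the
product and quotient rules. -/

open scoped BigOperators

/-- Partial derivative `∂f/∂q^α` of a scalar function on `ℝⁿ`. -/
noncomputable def pd {n : ℕ} (f : (Fin n → ℝ) → ℝ) (α : Fin n) (q : Fin n → ℝ) : ℝ :=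
  fderiv ℝ f q (Pi.single α 1)

/-- Lie derivative `(£_ξ G)_{μν}`. -/
noncomputable def lieG {n : ℕ} (ξ : (Fin n → ℝ) → Fin n → ℝ)
    (G : (Fin n → ℝ) → Fin n → Fin n → ℝ) (q : Fin n → ℝ) (μ ν : Fin n) : ℝ :=
  ∑ α : Fin n, (ξ q α * pd (fun p => G p μ ν) α q
      + pd (fun p => ξ p α) μ q * G q α ν
      + pd (fun p => ξ p α) ν q * G q μ α)

/-- The scaled Kantowski–Sachs supermetric, in coordinates `(q 0, q 1) = (a, b)`:
`Ḡ₁₁ = 0`, `Ḡ₁₂ = Ḡ₂₁ = 8ab`, `Ḡ₂₂ = 8a²`. -/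
noncomputable def ksMetric (q : Fin 2 → ℝ) : Fin 2 → Fin 2 → ℝ :=
  ![![0, 8 * q 0 * q 1], ![8 * q 0 * q 1, 8 * (q 0) ^ 2]]

section PartialDerivative

variable {n : ℕ} {f g : (Fin n → ℝ) → ℝ} {q : Fin n → ℝ} {α : Fin n}

lemma pd_eq_of_hasFDerivAt {L : (Fin n → ℝ) →L[ℝ] ℝ} (h : HasFDerivAt f L q) :
    pd f α q = L (Pi.single α 1) := by
  rw [pd, h.fderiv]

@[simp]
lemma pd_apply (i : Fin n) : pd (fun p => p i) α q = (Pi.single α 1 : Fin n → ℝ) i :=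
  pd_eq_of_hasFDerivAt (hasFDerivAt_apply i q)

@[simp]
lemma pd_const (c : ℝ) : pd (fun _ => c) α q = 0 := by
  simp [pd]

@[simp]
lemma pd_neg : pd (fun p => -f p) α q = -pd f α q := by
  simp [pd]

lemma pd_mul (hf : DifferentiableAt ℝ f q) (hg : DifferentiableAt ℝ g q) :
    pd (fun p => f p * g p) α q = pd f α q * g q + f q * pd g α q := by
  simp [pd, fderiv_fun_mul hf hg]; ring

lemma pd_pow (hf : DifferentiableAt ℝ f q) (k : ℕ) :
    pd (fun p => f p ^ k) α q = k * f q ^ (k - 1) * pd f α q := by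
  simp [pd, fderiv_fun_pow k hf]

lemma pd_inv (hf : DifferentiableAt ℝ f q) (hf0 : f q ≠ 0) :
    pd (fun p => (f p)⁻¹) α q = -pd f α q / f q ^ 2 := by
  rw [pd_eq_of_hasFDerivAt (f := fun p => (f p)⁻¹)
    ((hasDerivAt_inv hf0).comp_hasFDerivAt q hf.hasFDerivAt), pd]
  simp; ring

lemma pd_div (hf : DifferentiableAt ℝ f q) (hg : DifferentiableAt ℝ g q) (hg0 : g q ≠ 0) :
    pd (fun p => f p / g p) α q = (pd f α q * g q - f q * pd g α q) / g q ^ 2 := by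
  simp only [div_eq_mul_inv]
  rw [pd_mul (g := fun p => (g p)⁻¹) hf (hg.inv hg0), pd_inv hg hg0]
  field_simp
  ring

end PartialDerivative

lemma lieG_ksMetric_eq_mul {ξ : (Fin 2 → ℝ) → Fin 2 → ℝ} {q : Fin 2 → ℝ} {c : ℝ}
    (h₁₀ : pd (fun p => ξ p 1) 0 q = 0)
    (h₀₁ : q 1 * ξ q 0 + q 0 * ξ q 1
      + q 0 * q 1 * (pd (fun p => ξ p 0) 0 q + pd (fun p => ξ p 1) 1 q) = c * (q 0 * q 1))
    (h₁₁ : 2 * (ξ q 0 + q 1 * pd (fun p => ξ p 0) 1 q + q 0 * pd (fun p => ξ p 1) 1 q)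
      = c * q 0) (μ ν : Fin 2) :
    lieG ξ ksMetric q μ ν = c * ksMetric q μ ν := by
  fin_cases μ <;> fin_cases ν <;>
    simp (disch := fun_prop) only [lieG, ksMetric, Fin.sum_univ_two, Matrix.cons_val',
      Matrix.cons_val_zero, Matrix.cons_val_one, Matrix.cons_val_fin_one, pd_const, pd_mul, pd_pow, pd_apply, Pi.single_apply,
      Fin.isValue, Fin.zero_eta, Fin.mk_one, one_ne_zero, zero_ne_one, ↓reduceIte]
  · linear_combination 16 * q 0 * q 1 * h₁₀
  · linear_combination 8 * h₀₁ + 8 * q 0 ^ 2 * h₁₀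
  · linear_combination 8 * h₀₁ + 8 * q 0 ^ 2 * h₁₀
  · linear_combination 8 * q 0 * h₁₁

lemma lieG_ksMetric_eq_zero {ξ : (Fin 2 → ℝ) → Fin 2 → ℝ} {q : Fin 2 → ℝ}
    (h₁₀ : pd (fun p => ξ p 1) 0 q = 0)
    (h₀₁ : q 1 * ξ q 0 + q 0 * ξ q 1
      + q 0 * q 1 * (pd (fun p => ξ p 0) 0 q + pd (fun p => ξ p 1) 1 q) = 0)
    (h₁₁ : ξ q 0 + q 1 * pd (fun p => ξ p 0) 1 q + q 0 * pd (fun p => ξ p 1) 1 q = 0)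
    (μ ν : Fin 2) :
    lieG ξ ksMetric q μ ν = 0 := by
  simpa using lieG_ksMetric_eq_mul (c := 0) h₁₀ (by simpa using h₀₁) (by simpa using h₁₁) μ ν

/-- the vector fields `ξ₁ = (−a, b)`, `ξ₂ = (−a/(2b), 1)`, `ξ₃ = (1/(ab), 0)`
are Killing fields of the scaled Kantowski–Sachs supermetric on `{a > 0, b > 0}`, and
`h = (a/2, 0)` is a homothetic field with `£_h Ḡ = Ḡ`. -/
theorem kantowski_sachs_killing_and_homothetic_fields :
    (∀ q : Fin 2 → ℝ, 0 < q 0 → 0 < q 1 → ∀ μ ν,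
      lieG (fun p => ![-(p 0), p 1]) ksMetric q μ ν = 0)
    ∧ (∀ q : Fin 2 → ℝ, 0 < q 0 → 0 < q 1 → ∀ μ ν,
      lieG (fun p => ![-(p 0) / (2 * p 1), 1]) ksMetric q μ ν = 0)
    ∧ (∀ q : Fin 2 → ℝ, 0 < q 0 → 0 < q 1 → ∀ μ ν,
      lieG (fun p => ![1 / (p 0 * p 1), 0]) ksMetric q μ ν = 0)
    ∧ (∀ q : Fin 2 → ℝ, 0 < q 0 → 0 < q 1 → ∀ μ ν,
      lieG (fun p => ![p 0 / 2, 0]) ksMetric q μ ν = ksMetric q μ ν) := by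
  refine ⟨fun q ha hb => lieG_ksMetric_eq_zero ?_ ?_ ?_,
    fun q ha hb => lieG_ksMetric_eq_zero ?_ ?_ ?_, fun q ha hb => lieG_ksMetric_eq_zero ?_ ?_ ?_,
    fun q ha hb μ ν => (lieG_ksMetric_eq_mul (c := 1) ?_ ?_ ?_ μ ν).trans (one_mul _)⟩
  all_goals simp (disch := first | fun_prop | positivity) only [Matrix.cons_val_zero,
    Matrix.cons_val_one, pd_neg, pd_div, pd_mul, pd_apply, pd_const, Pi.single_apply, Fin.isValue,
    one_ne_zero, zero_ne_one, ↓reduceIte]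
  all_goals field_simp
  all_goals ring
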